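/- arXiv:2211.10112 — 8 statements merged into one kernel-verified Lean document; each statement's English description precedes it below -/
import Mathlib

section
/- Let n be a positive integer. Define g : ℝⁿ → ℝ by g(x) = ∑ i, (log(1 + |x i|) - |x i| / (2 + 2|x i|)). Then (a) g(x) ≥ 0 = g(0) for every x ∈ ℝⁿ, and (b) if g is Fréchet differentiable at a point x with fderiv ℝ g x = 0, then x = 0. In particular every stationary point of g is a global minimizer, i.e., g is invex. -/
open Real

/-!
The function is separable, `g x = ∑ i, φ (x i)` with `φ = coordPenalty`. Nonnegativity of `φ` is
`log (1 + s) ≥ s / (1 + s) ≥ s / (2 + 2s)` for `s ≥ 0`. Away from `0`,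
`φ` is smooth with `φ' t = ± (1 + 2|t|) / (2 (1 + |t|)²) ≠ 0`, and differentiating `g` along the
`i`-th coordinate axis recovers `φ'(x i)`; so a critical point of `g` has no nonzero coordinate.
-/

noncomputable def coordPenalty (t : ℝ) : ℝ := log (1 + |t|) - |t| / (2 + 2 * |t|)

lemma coordPenalty_zero : coordPenalty 0 = 0 := by
  simp [coordPenalty]

lemma coordPenalty_neg (t : ℝ) : coordPenalty (-t) = coordPenalty t := by
  simp [coordPenalty]

lemma coordPenalty_nonneg (t : ℝ) : 0 ≤ coordPenalty t := by
  have hs : 0 ≤ |t| := abs_nonneg t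
  have hlog : 1 - (1 + |t|)⁻¹ ≤ log (1 + |t|) := one_sub_inv_le_log_of_pos (by positivity)
  have hrw : 1 - (1 + |t|)⁻¹ = |t| / (1 + |t|) := by field_simp; ring
  have hfrac : |t| / (2 + 2 * |t|) ≤ |t| / (1 + |t|) :=
    div_le_div_of_nonneg_left hs (by positivity) (by linarith)
  unfold coordPenalty
  linarith

lemma hasDerivAt_coordPenalty_of_pos {t : ℝ} (ht : 0 < t) :
    HasDerivAt coordPenalty ((1 + 2 * t) / (2 * (1 + t) ^ 2)) t := by
  have hlog : HasDerivAt (fun s : ℝ => log (1 + s)) (1 / (1 + t)) t := by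
    simpa using ((hasDerivAt_id t).const_add 1).log (by positivity)
  have hfrac : HasDerivAt (fun s : ℝ => s / (2 + 2 * s))
      ((1 * (2 + 2 * t) - t * (2 * 1)) / (2 + 2 * t) ^ 2) t :=
    (hasDerivAt_id t).div (((hasDerivAt_id t).const_mul 2).const_add 2) (by positivity)
  have hsmooth : HasDerivAt (fun s : ℝ => log (1 + s) - s / (2 + 2 * s))
      ((1 + 2 * t) / (2 * (1 + t) ^ 2)) t := by
    refine (hlog.sub hfrac).congr_deriv ?_
    field_simp
    ring
  apply hsmooth.congr_of_eventuallyEq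
  filter_upwards [Ioi_mem_nhds ht] with s hs
  simp only [coordPenalty, abs_of_pos (Set.mem_Ioi.mp hs)]

lemma hasDerivAt_coordPenalty_of_neg {t : ℝ} (ht : t < 0) :
    HasDerivAt coordPenalty (-((1 + 2 * -t) / (2 * (1 + -t) ^ 2))) t := by
  have h := (hasDerivAt_coordPenalty_of_pos (neg_pos.mpr ht)).comp t (hasDerivAt_neg t)
  rw [show coordPenalty ∘ Neg.neg = coordPenalty from funext coordPenalty_neg] at h
  exact h.congr_deriv (by ring)

lemma ne_zero_of_hasDerivAt_coordPenalty {t d : ℝ} (ht : t ≠ 0)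
    (hd : HasDerivAt coordPenalty d t) : d ≠ 0 := by
  rcases ht.lt_or_gt with hneg | hpos
  · rw [hd.unique (hasDerivAt_coordPenalty_of_neg hneg), neg_ne_zero]
    have : 0 < 1 + -t := by linarith
    exact (div_pos (by linarith) (by positivity)).ne'
  · rw [hd.unique (hasDerivAt_coordPenalty_of_pos hpos)]
    exact (div_pos (by linarith) (by positivity)).ne'

lemma hasDerivAt_of_differentiableAt_sum_apply {ι : Type*} [Fintype ι] [DecidableEq ι]
    {f : ℝ → ℝ} {x : EuclideanSpace ℝ ι}
    (hf : DifferentiableAt ℝ (fun y : EuclideanSpace ℝ ι => ∑ j, f (y j)) x) (i : ι) :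
    HasDerivAt f
      (fderiv ℝ (fun y : EuclideanSpace ℝ ι => ∑ j, f (y j)) x (EuclideanSpace.single i 1))
      (x i) := by
  set e : EuclideanSpace ℝ ι := EuclideanSpace.single i 1
  let line : ℝ → EuclideanSpace ℝ ι := fun t => x + (t - x i) • e
  have hline : HasDerivAt line e (x i) :=
    ((((hasDerivAt_id (x i)).sub_const (x i)).smul_const e).const_add x).congr_deriv
      (one_smul ℝ e)
  have hf_at : HasFDerivAt (fun y : EuclideanSpace ℝ ι => ∑ j, f (y j))
      (fderiv ℝ (fun y : EuclideanSpace ℝ ι => ∑ j, f (y j)) x) (line (x i)) := by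
    simpa [line] using hf.hasFDerivAt
  have hcomp := hf_at.comp_hasDerivAt (x i) hline
  have hrestrict : (fun y : EuclideanSpace ℝ ι => ∑ j, f (y j)) ∘ line =
      fun t => f t + ∑ j ∈ Finset.univ.erase i, f (x j) := by
    funext t
    rw [Function.comp_apply, ← Finset.add_sum_erase _ _ (Finset.mem_univ i)]
    congr 1
    · simp [line, e]
    · refine Finset.sum_congr rfl fun j hj => ?_
      simp [line, e, Finset.ne_of_mem_erase hj]
  rw [hrestrict] at hcomp
  exact (hasDerivAt_add_const_iff _).mp hcomp

theorem stmt_4_general (n : ℕ)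
    (g : EuclideanSpace ℝ (Fin n) → ℝ)
    (hg : ∀ x, g x = ∑ i, (Real.log (1 + |x i|) - |x i| / (2 + 2 * |x i|))) :
    (g 0 = 0) ∧ (∀ x, 0 ≤ g x) ∧
    (∀ x, DifferentiableAt ℝ g x → fderiv ℝ g x = 0 → x = 0) := by
  obtain rfl : g = fun x => ∑ i, coordPenalty (x i) := funext hg
  refine ⟨by simp [coordPenalty_zero],
    fun x => Finset.sum_nonneg fun i _ => coordPenalty_nonneg (x i), ?_⟩
  intro x hdiff hcrit
  by_contra hx
  obtain ⟨i, hi⟩ : ∃ i, x i ≠ 0 := by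
    by_contra! h
    exact hx (by ext j; exact h j)
  have hpartial := hasDerivAt_of_differentiableAt_sum_apply hdiff i
  rw [hcrit] at hpartial
  exact ne_zero_of_hasDerivAt_coordPenalty hi hpartial rfl

theorem stmt_4 (n : ℕ) (hn : 0 < n)
    (g : EuclideanSpace ℝ (Fin n) → ℝ)
    (hg : ∀ x, g x = ∑ i, (Real.log (1 + |x i|) - |x i| / (2 + 2 * |x i|))) :
    (g 0 = 0) ∧ (∀ x, 0 ≤ g x) ∧
    (∀ x, DifferentiableAt ℝ g x → fderiv ℝ g x = 0 → x = 0) :=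
  stmt_4_general n g hg
end

section
/- Let m, n be positive integers, let f : ℝᵐ → ℝ be continuously differentiable and assume that every stationary point of f is a global minimizer of f (i.e., for all y, fderiv ℝ f y = 0 implies f y ≤ f z for all z). Let H : ℝⁿ → ℝᵐ be a surjective continuous linear map (full row rank) and let b ∈ ℝᵐ. Then the function h(x) = f(H x - b) has the same property: for every x with fderiv ℝ h x = 0, x is a global minimizer of h. In particular h is invex. -/
/-!
A stationary point `x` of `h = f ∘ (H · - b)` gives `fderiv f (H x - b) ∘ H = 0` by the chain rule,
and surjectivity of `H` cancels it, so `H x - b` is a stationary point of `f`, hence a global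
minimizer of `f`; every value of `h` is a value of `f`.
-/

variable {𝕜 E F G : Type*} [NontriviallyNormedField 𝕜]
  [NormedAddCommGroup E] [NormedSpace 𝕜 E] [NormedAddCommGroup F] [NormedSpace 𝕜 F]
  [NormedAddCommGroup G] [NormedSpace 𝕜 G]

theorem ContinuousLinearMap.eq_zero_of_comp_eq_zero_of_surjective {L : F →L[𝕜] G} {H : E →L[𝕜] F}
    (hH : Function.Surjective H) (hL : L.comp H = 0) : L = 0 := by
  ext v
  obtain ⟨u, rfl⟩ := hH v
  exact congrArg (fun M : E →L[𝕜] G => M u) hL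

theorem fderiv_eq_zero_of_fderiv_comp_affine_eq_zero {f : F → G} {H : E →L[𝕜] F} {b : F} {x : E}
    (hH : Function.Surjective H) (hx : fderiv 𝕜 (fun x => f (H x - b)) x = 0) :
    fderiv 𝕜 f (H x - b) = 0 := by
  by_cases hf : DifferentiableAt 𝕜 f (H x - b)
  · have hchain : fderiv 𝕜 (fun x => f (H x - b)) x = (fderiv 𝕜 f (H x - b)).comp H :=
      (hf.hasFDerivAt.comp x (H.hasFDerivAt.sub_const b)).fderiv
    exact ContinuousLinearMap.eq_zero_of_comp_eq_zero_of_surjective hH (hchain ▸ hx)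
  · -- junk value: `fderiv` is `0` where `f` is not differentiable
    exact fderiv_zero_of_not_differentiableAt hf

theorem stmt_5_general (m n : ℕ)
    (f : EuclideanSpace ℝ (Fin m) → ℝ)
    (hmin : ∀ y, fderiv ℝ f y = 0 → ∀ z, f y ≤ f z)
    (H : EuclideanSpace ℝ (Fin n) →L[ℝ] EuclideanSpace ℝ (Fin m))
    (hH : Function.Surjective H)
    (b : EuclideanSpace ℝ (Fin m))
    (h : EuclideanSpace ℝ (Fin n) → ℝ)
    (hh : ∀ x, h x = f (H x - b)) :
    ∀ x, fderiv ℝ h x = 0 → ∀ z, h x ≤ h z := by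
  obtain rfl : h = fun x => f (H x - b) := funext hh
  intro x hx z
  exact hmin _ (fderiv_eq_zero_of_fderiv_comp_affine_eq_zero hH hx) _

theorem stmt_5 (m n : ℕ) (hm : 0 < m) (hn : 0 < n)
    (f : EuclideanSpace ℝ (Fin m) → ℝ) (hf : ContDiff ℝ 1 f)
    (hmin : ∀ y, fderiv ℝ f y = 0 → ∀ z, f y ≤ f z)
    (H : EuclideanSpace ℝ (Fin n) →L[ℝ] EuclideanSpace ℝ (Fin m))
    (hH : Function.Surjective H)
    (b : EuclideanSpace ℝ (Fin m))
    (h : EuclideanSpace ℝ (Fin n) → ℝ)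
    (hh : ∀ x, h x = f (H x - b)) :
    ∀ x, fderiv ℝ h x = 0 → ∀ z, h x ≤ h z :=
  stmt_5_general m n f hmin H hH b h hh
end

section
/- Let n be a positive integer, p ∈ (0,1) and ε ≥ (p(1-p))^(1/(2-p)). Define g : ℝⁿ → ℝ by g(x) = ∑ i, (|x i| + ε)^p. Then for every fixed u ∈ ℝⁿ, the function h(x) = g(x) + (1/2)‖x - u‖² is convex on ℝⁿ. -/
/-!
Writing `‖x - u‖² = ∑ i, (x i - u i)²`, the objective splits into a sum of one-variable functions
`t ↦ (|t| + ε)^p + (t - c)²/2`, so it suffices to show each of these is convex. Up to an affine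
term this is `ψ (|t|)` with `ψ s = (s + ε)^p + s²/2`. On `[0, ∞)` the function `ψ` is increasing,
and `ψ'' s = 1 - p(1 - p)(s + ε)^(p-2) ≥ 0` exactly because `(s + ε)^(2-p) ≥ ε^(2-p) ≥ p(1 - p)`,
which is the hypothesis on `ε`. An increasing convex function of the convex function `|t|` is
convex.
-/

open Real Set

lemma convexOn_univ_sum_apply {ι : Type*} [Fintype ι] {f : ι → ℝ → ℝ}
    (hf : ∀ i, ConvexOn ℝ univ (f i)) :
    ConvexOn ℝ univ (fun x : EuclideanSpace ℝ ι => ∑ i, f i (x i)) := by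
  have := Finset.sum_induction (s := Finset.univ) (fun i (x : EuclideanSpace ℝ ι) => f i (x i))
    (ConvexOn ℝ univ) (fun _ _ => ConvexOn.add) (convexOn_const 0 convex_univ)
    (fun i _ => (hf i).comp_linearMap (EuclideanSpace.proj i : StrongDual ℝ _).toLinearMap)
  simpa only [Finset.sum_fn] using this

section ShiftedPower

variable {p ε : ℝ}

lemma hasDerivAt_add_const_rpow {s : ℝ} (p : ℝ) (h : 0 < s + ε) :
    HasDerivAt (fun t => (t + ε) ^ p) (p * (s + ε) ^ (p - 1)) s :=
  (hasDerivAt_rpow_const (Or.inl h.ne')).comp_add_const s ε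

lemma one_add_mul_rpow_sub_two_nonneg (hp : p ≤ 2) (hε : 0 < ε)
    (hkey : p * (1 - p) ≤ ε ^ (2 - p)) {t : ℝ} (ht : ε ≤ t) :
    0 ≤ p * ((p - 1) * t ^ (p - 2)) + 1 := by
  have ht0 : 0 < t := hε.trans_le ht
  have hpow : 0 < t ^ (2 - p) := rpow_pos_of_pos ht0 _
  have hle : p * (1 - p) ≤ t ^ (2 - p) := hkey.trans (rpow_le_rpow hε.le ht (by linarith))
  rw [show p - 2 = -(2 - p) by ring, rpow_neg ht0.le,
    show p * ((p - 1) * (t ^ (2 - p))⁻¹) + 1 = (t ^ (2 - p) - p * (1 - p)) / t ^ (2 - p) by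
      field_simp; ring]
  exact div_nonneg (by linarith) hpow.le

lemma convexOn_add_const_rpow_add_sq (hp : p ≤ 2) (hε : 0 < ε)
    (hkey : p * (1 - p) ≤ ε ^ (2 - p)) :
    ConvexOn ℝ (Ici 0) (fun s => (s + ε) ^ p + s ^ 2 / 2) := by
  have hpos : ∀ s ∈ interior (Ici (0 : ℝ)), 0 < s + ε := fun s hs => by
    rw [interior_Ici, mem_Ioi] at hs; linarith
  refine convexOn_of_hasDerivWithinAt2_nonneg (convex_Ici 0)
    (f' := fun s => p * (s + ε) ^ (p - 1) + s) (f'' := fun s => p * ((p - 1) * (s + ε) ^ (p - 2)) + 1)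
    ?_ (fun s hs => ?_) (fun s hs => ?_) (fun s hs => ?_)
  · refine ContinuousOn.add ?_ (by fun_prop)
    exact (continuous_add_const ε).continuousOn.rpow_const fun s hs =>
      Or.inl (by rw [mem_Ici] at hs; linarith)
  · refine ((hasDerivAt_add_const_rpow p (hpos s hs)).add
      ((hasDerivAt_pow 2 s).div_const 2) |>.hasDerivWithinAt).congr_deriv ?_
    push_cast; ring
  · have := ((hasDerivAt_add_const_rpow (p - 1) (hpos s hs)).const_mul p).add (hasDerivAt_id s)
    exact this.hasDerivWithinAt.congr_deriv (by ring_nf)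
  · rw [interior_Ici, mem_Ioi] at hs
    exact one_add_mul_rpow_sub_two_nonneg hp hε hkey (by linarith)

lemma monotoneOn_add_const_rpow_add_sq (hp : 0 ≤ p) (hε : 0 ≤ ε) :
    MonotoneOn (fun s => (s + ε) ^ p + s ^ 2 / 2) (Ici 0) := by
  intro a ha b _ hab
  rw [mem_Ici] at ha
  dsimp only
  gcongr

lemma convexOn_rpow_abs_add_sq (hp₀ : 0 ≤ p) (hp : p ≤ 2) (hε : 0 < ε)
    (hkey : p * (1 - p) ≤ ε ^ (2 - p)) :
    ConvexOn ℝ univ (fun t : ℝ => (|t| + ε) ^ p + t ^ 2 / 2) := by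
  have himage : (|·|) '' (univ : Set ℝ) = Ici 0 := by
    ext y
    exact ⟨by rintro ⟨x, -, rfl⟩; exact abs_nonneg x, fun hy => ⟨y, trivial, abs_of_nonneg hy⟩⟩
  have habs : ConvexOn ℝ univ (|·| : ℝ → ℝ) := convexOn_univ_norm
  refine (ConvexOn.comp (g := fun s => (s + ε) ^ p + s ^ 2 / 2) ?_ habs ?_).congr
    fun t _ => by simp only [Function.comp, sq_abs]
  · rw [himage]; exact convexOn_add_const_rpow_add_sq hp hε hkey
  · rw [himage]; exact monotoneOn_add_const_rpow_add_sq hp₀ hε.le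

lemma convexOn_rpow_abs_add_half_sq_sub (hp₀ : 0 ≤ p) (hp : p ≤ 2) (hε : 0 < ε)
    (hkey : p * (1 - p) ≤ ε ^ (2 - p)) (c : ℝ) :
    ConvexOn ℝ univ (fun t : ℝ => (|t| + ε) ^ p + 1 / 2 * (t - c) ^ 2) := by
  have hlin : ConvexOn ℝ univ (fun t : ℝ => -c * t) :=
    (LinearMap.mul ℝ ℝ (-c)).convexOn convex_univ
  refine ((convexOn_rpow_abs_add_sq hp₀ hp hε hkey).add hlin).add
    (convexOn_const (c ^ 2 / 2) convex_univ) |>.congr fun t _ => ?_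
  simp only [Pi.add_apply]
  ring

end ShiftedPower

theorem stmt_6_general (n : ℕ) (p ε : ℝ) (hp : p ∈ Set.Ioo (0:ℝ) 1)
    (hε : (p * (1 - p)) ^ ((1:ℝ) / (2 - p)) ≤ ε)
    (g : EuclideanSpace ℝ (Fin n) → ℝ)
    (hg : ∀ x, g x = ∑ i, (|x i| + ε) ^ p)
    (u : EuclideanSpace ℝ (Fin n)) :
    ConvexOn ℝ Set.univ (fun x => g x + (1 / 2) * ‖x - u‖ ^ 2) := by
  obtain ⟨hp₀, hp₁⟩ := hp
  have hq : 0 < p * (1 - p) := mul_pos hp₀ (by linarith)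
  have hε₀ : 0 < ε := (rpow_pos_of_pos hq _).trans_le hε
  have hkey : p * (1 - p) ≤ ε ^ (2 - p) := by
    rwa [one_div, rpow_inv_le_iff_of_pos hq.le hε₀.le (by linarith)] at hε
  refine (convexOn_univ_sum_apply fun i =>
    convexOn_rpow_abs_add_half_sq_sub hp₀.le (by linarith) hε₀ hkey (u i)).congr fun x _ => ?_
  simp only [hg, EuclideanSpace.real_norm_sq_eq, PiLp.sub_apply, Finset.mul_sum,
    Finset.sum_add_distrib]

theorem stmt_6 (n : ℕ) (hn : 0 < n) (p ε : ℝ) (hp : p ∈ Set.Ioo (0:ℝ) 1)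
    (hε : (p * (1 - p)) ^ ((1:ℝ) / (2 - p)) ≤ ε)
    (g : EuclideanSpace ℝ (Fin n) → ℝ)
    (hg : ∀ x, g x = ∑ i, (|x i| + ε) ^ p)
    (u : EuclideanSpace ℝ (Fin n)) :
    ConvexOn ℝ Set.univ (fun x => g x + (1 / 2) * ‖x - u‖ ^ 2) :=
  stmt_6_general n p ε hp hε g hg u
end

section
/- Let n be a positive integer. Define g : ℝⁿ → ℝ by g(x) = ∑ i, log(1 + |x i|). Then for every fixed u ∈ ℝⁿ, the function h(x) = g(x) + (1/2)‖x - u‖² is convex on ℝⁿ. -/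
open Real Set

/-! Coordinatewise, `h` is `∑ i, log (1 + |x i|) + (x i - u i) ^ 2 / 2`. Up to an affine term each
summand is `ψ (|x i|)` with `ψ s = log (1 + s) + s ^ 2 / 2`, and `ψ'' s = 1 - (1 + s)⁻² ≥ 0` on
`[0, ∞)`: the quadratic term outweighs the concavity of the logarithm. Being also
nondecreasing there, `ψ` composed with the convex function `|·|` is convex. -/

theorem ConvexOn.fun_sum {𝕜 E β ι : Type*} [Semiring 𝕜] [PartialOrder 𝕜] [AddCommMonoid E]
    [AddCommMonoid β] [PartialOrder β] [IsOrderedAddMonoid β] [SMul 𝕜 E] [Module 𝕜 β]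
    {s : Set E} {t : Finset ι} {f : ι → E → β} (hs : Convex 𝕜 s)
    (hf : ∀ i ∈ t, ConvexOn 𝕜 s (f i)) : ConvexOn 𝕜 s (fun x => ∑ i ∈ t, f i x) := by
  refine ⟨hs, fun x hx y hy a b ha hb hab => ?_⟩
  simp only [Finset.smul_sum, ← Finset.sum_add_distrib]
  exact Finset.sum_le_sum fun i hi => (hf i hi).2 hx hy ha hb hab

theorem convexOn_log_one_add_add_sq_div_two :
    ConvexOn ℝ (Ici 0) (fun s : ℝ => log (1 + s) + s ^ 2 / 2) := by
  refine convexOn_of_hasDerivWithinAt2_nonneg (f' := fun s => (1 + s)⁻¹ + s)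
    (f'' := fun s => 1 - ((1 + s) ^ 2)⁻¹) (convex_Ici 0) ?_ ?_ ?_ ?_
  · refine ContinuousOn.add (ContinuousOn.log (by fun_prop) fun s hs => ?_) (by fun_prop)
    exact (by linarith [mem_Ici.mp hs] : (1 + s) ≠ 0)
  · intro s hs
    rw [interior_Ici, mem_Ioi] at hs
    have h1 : HasDerivAt (fun s : ℝ => 1 + s) 1 s := (hasDerivAt_id s).const_add 1
    refine (((h1.log (by linarith)).add ((hasDerivAt_pow 2 s).div_const 2)).congr_deriv
      ?_).hasDerivWithinAt
    simp only [one_div]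
    ring
  · intro s hs
    rw [interior_Ici, mem_Ioi] at hs
    have h1 : HasDerivAt (fun s : ℝ => 1 + s) 1 s := (hasDerivAt_id s).const_add 1
    refine (((h1.inv (by linarith)).add (hasDerivAt_id s)).congr_deriv ?_).hasDerivWithinAt
    ring
  · intro s hs
    rw [interior_Ici, mem_Ioi] at hs
    have : 1 ≤ (1 + s) ^ 2 := by nlinarith
    linarith [inv_le_one_of_one_le₀ this]

theorem monotoneOn_log_one_add_add_sq_div_two :
    MonotoneOn (fun s : ℝ => log (1 + s) + s ^ 2 / 2) (Ici 0) := by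
  intro a (ha : 0 ≤ a) b _ hab
  exact add_le_add (log_le_log (by linarith) (by linarith)) (by gcongr)

theorem convexOn_log_one_add_abs_add_sq_div_two :
    ConvexOn ℝ univ (fun t : ℝ => log (1 + |t|) + t ^ 2 / 2) := by
  have habs : (fun t : ℝ => |t|) '' univ = Ici 0 := by
    refine image_univ.trans (Set.ext fun s => ⟨?_, fun hs => ⟨s, abs_of_nonneg hs⟩⟩)
    rintro ⟨t, rfl⟩
    exact abs_nonneg t
  have := (habs ▸ convexOn_log_one_add_add_sq_div_two).comp (convexOn_univ_norm (E := ℝ))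
    (habs ▸ monotoneOn_log_one_add_add_sq_div_two)
  simpa only [Function.comp_def, Real.norm_eq_abs, sq_abs] using this

theorem convexOn_log_one_add_abs_add_sq_sub_div_two (a : ℝ) :
    ConvexOn ℝ univ (fun t : ℝ => log (1 + |t|) + (t - a) ^ 2 / 2) := by
  refine (convexOn_log_one_add_abs_add_sq_div_two.add
    ((LinearMap.lsmul ℝ ℝ (-a)).convexOn convex_univ |>.add_const (a ^ 2 / 2))).congr
    fun t _ => ?_
  simp only [Pi.add_apply, LinearMap.lsmul_apply, smul_eq_mul]
  ring

theorem stmt_7_general (n : ℕ)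
    (g : EuclideanSpace ℝ (Fin n) → ℝ)
    (hg : ∀ x, g x = ∑ i, Real.log (1 + |x i|))
    (u : EuclideanSpace ℝ (Fin n)) :
    ConvexOn ℝ Set.univ (fun x => g x + (1 / 2) * ‖x - u‖ ^ 2) := by
  have hsep : (fun x => g x + (1 / 2) * ‖x - u‖ ^ 2) =
      fun x : EuclideanSpace ℝ (Fin n) => ∑ i, (log (1 + |x i|) + (x i - u i) ^ 2 / 2) := by
    funext x
    rw [hg, EuclideanSpace.real_norm_sq_eq, Finset.mul_sum, ← Finset.sum_add_distrib]
    simp only [PiLp.sub_apply]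
    congr 1 with i
    ring
  rw [hsep]
  exact ConvexOn.fun_sum convex_univ fun i _ =>
    (convexOn_log_one_add_abs_add_sq_sub_div_two (u i)).comp_linearMap
      (EuclideanSpace.proj i).toLinearMap

theorem stmt_7 (n : ℕ) (hn : 0 < n)
    (g : EuclideanSpace ℝ (Fin n) → ℝ)
    (hg : ∀ x, g x = ∑ i, Real.log (1 + |x i|))
    (u : EuclideanSpace ℝ (Fin n)) :
    ConvexOn ℝ Set.univ (fun x => g x + (1 / 2) * ‖x - u‖ ^ 2) :=
  stmt_7_general n g hg u
end

section
/- Let n be a positive integer. Define g : ℝⁿ → ℝ by g(x) = ∑ i, (x i)² / (1 + (x i)²). Then for every fixed u ∈ ℝⁿ, the function h(x) = g(x) + (1/2)‖x - u‖² is convex on ℝⁿ. -/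
/-!
Both `g` and `‖x - u‖²` split over the coordinates, so `h` is a sum of the one-variable functions
`t ↦ t² / (1 + t²) + (t - c)² / 2`. The second derivative of `t² / (1 + t²)` is
`(2 - 6t²) / (1 + t²)³ ≥ -1/2`, so each of them has second derivative at least `1/2`.
-/

theorem hasDerivAt_sq_div_one_add_sq (t : ℝ) :
    HasDerivAt (fun t : ℝ => t ^ 2 / (1 + t ^ 2)) (2 * t / (1 + t ^ 2) ^ 2) t := by
  have hsq : HasDerivAt (fun t : ℝ => t ^ 2) (2 * t) t := by simpa using hasDerivAt_pow 2 t
  refine (hsq.div (hsq.const_add 1) (by positivity)).congr_deriv ?_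
  ring

theorem hasDerivAt_two_mul_div_one_add_sq_sq (t : ℝ) :
    HasDerivAt (fun t : ℝ => 2 * t / (1 + t ^ 2) ^ 2) ((2 - 6 * t ^ 2) / (1 + t ^ 2) ^ 3) t := by
  have hsq : HasDerivAt (fun t : ℝ => t ^ 2) (2 * t) t := by simpa using hasDerivAt_pow 2 t
  have hnum : HasDerivAt (fun t : ℝ => 2 * t) 2 t := by simpa using (hasDerivAt_id t).const_mul 2
  have hden : HasDerivAt (fun t : ℝ => (1 + t ^ 2) ^ 2) (2 * (1 + t ^ 2) * (2 * t)) t :=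
    ((hasDerivAt_pow 2 _).comp t (hsq.const_add 1)).congr_deriv (by ring)
  refine (hnum.div hden (by positivity)).congr_deriv ?_
  field_simp
  ring

theorem neg_half_le_two_sub_six_mul_sq_div_one_add_sq_pow_three (t : ℝ) :
    -(1 / 2) ≤ (2 - 6 * t ^ 2) / (1 + t ^ 2) ^ 3 := by
  rw [le_div_iff₀ (by positivity)]
  -- with `s = t²`: `(2 - 6s) + (1 + s)³ / 2 = (s - 1)² (s + 5) / 2`
  nlinarith [mul_nonneg (sq_nonneg (t ^ 2 - 1)) (by positivity : (0 : ℝ) ≤ t ^ 2 + 5)]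

theorem convexOn_sq_div_one_add_sq_add_half_sq_sub (c : ℝ) :
    ConvexOn ℝ Set.univ (fun t : ℝ => t ^ 2 / (1 + t ^ 2) + 1 / 2 * (t - c) ^ 2) := by
  have hquad (t : ℝ) : HasDerivAt (fun t : ℝ => 1 / 2 * (t - c) ^ 2) (t - c) t := by
    refine ((((hasDerivAt_id t).sub_const c).pow 2).const_mul (1 / 2 : ℝ)).congr_deriv ?_
    simp
  have hf' (t : ℝ) := (hasDerivAt_sq_div_one_add_sq t).add (hquad t)
  have hf'' (t : ℝ) := (hasDerivAt_two_mul_div_one_add_sq_sq t).add ((hasDerivAt_id t).sub_const c)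
  refine convexOn_of_hasDerivWithinAt2_nonneg convex_univ
    (fun t _ => (hf' t).continuousAt.continuousWithinAt) (fun t _ => (hf' t).hasDerivWithinAt)
    (fun t _ => (hf'' t).hasDerivWithinAt) fun t _ => ?_
  linarith [neg_half_le_two_sub_six_mul_sq_div_one_add_sq_pow_three t]

theorem ConvexOn.sum {𝕜 E β ι : Type*} [Semiring 𝕜] [PartialOrder 𝕜] [AddCommMonoid E]
    [AddCommMonoid β] [PartialOrder β] [IsOrderedAddMonoid β] [SMul 𝕜 E] [Module 𝕜 β]
    {s : Set E} (hs : Convex 𝕜 s) {t : Finset ι} {f : ι → E → β}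
    (hf : ∀ i ∈ t, ConvexOn 𝕜 s (f i)) : ConvexOn 𝕜 s (fun x => ∑ i ∈ t, f i x) := by
  classical
  induction t using Finset.induction_on with
  | empty => simpa using convexOn_const 0 hs
  | insert i t hi ih =>
    simp only [Finset.sum_insert hi]
    exact (hf i (t.mem_insert_self i)).add (ih fun j hj => hf j (Finset.mem_insert_of_mem hj))

theorem convexOn_univ_sum_comp_apply {ι : Type*} [Fintype ι] {φ : ι → ℝ → ℝ}
    (hφ : ∀ i, ConvexOn ℝ Set.univ (φ i)) :
    ConvexOn ℝ Set.univ (fun x : EuclideanSpace ℝ ι => ∑ i, φ i (x i)) :=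
  ConvexOn.sum convex_univ fun i _ => (hφ i).comp_linearMap (EuclideanSpace.projₗ i)

theorem stmt_9_general (n : ℕ)
    (g : EuclideanSpace ℝ (Fin n) → ℝ)
    (hg : ∀ x, g x = ∑ i, (x i) ^ 2 / (1 + (x i) ^ 2))
    (u : EuclideanSpace ℝ (Fin n)) :
    ConvexOn ℝ Set.univ (fun x => g x + (1 / 2) * ‖x - u‖ ^ 2) := by
  have hsplit (x : EuclideanSpace ℝ (Fin n)) :
      g x + 1 / 2 * ‖x - u‖ ^ 2 = ∑ i, ((x i) ^ 2 / (1 + (x i) ^ 2) + 1 / 2 * (x i - u i) ^ 2) := by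
    simp [hg, EuclideanSpace.real_norm_sq_eq, Finset.mul_sum, Finset.sum_add_distrib]
  simp only [hsplit]
  exact convexOn_univ_sum_comp_apply fun i => convexOn_sq_div_one_add_sq_add_half_sq_sub (u i)

theorem stmt_9 (n : ℕ) (hn : 0 < n)
    (g : EuclideanSpace ℝ (Fin n) → ℝ)
    (hg : ∀ x, g x = ∑ i, (x i) ^ 2 / (1 + (x i) ^ 2))
    (u : EuclideanSpace ℝ (Fin n)) :
    ConvexOn ℝ Set.univ (fun x => g x + (1 / 2) * ‖x - u‖ ^ 2) :=
  stmt_9_general n g hg u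
end

section
/- Let n be a positive integer. Define g : ℝⁿ → ℝ by g(x) = ∑ i, (log(1 + |x i|) - |x i| / (2 + 2|x i|)). Then for every fixed u ∈ ℝⁿ, the function h(x) = g(x) + (1/2)‖x - u‖² is convex on ℝⁿ. -/
/-!
Coordinatewise, `h x = ∑ i, (φ |x i| - u i * x i + (u i) ^ 2 / 2)` with
`φ s = log (1 + s) - s / (2 + 2 s) + s ^ 2 / 2`. On `s ≥ 0` we have
`φ' s = (1 + 2 s) / (2 (1 + s) ^ 2) + s ≥ 0` and `φ'' s = 1 - (1 + s)⁻² + (1 + s)⁻³ ≥ 0`,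
so `φ` is convex and monotone there; hence `φ ∘ |·|` is convex on `ℝ`, and so is each summand.
-/

open Real Set

noncomputable def proxProfile (s : ℝ) : ℝ := log (1 + s) - s / (2 + 2 * s) + s ^ 2 / 2

noncomputable def proxProfileDeriv (s : ℝ) : ℝ := 1 / (1 + s) - 1 / (2 * (1 + s) ^ 2) + s

lemma hasDerivAt_proxProfile {s : ℝ} (hs : -1 < s) :
    HasDerivAt proxProfile (proxProfileDeriv s) s := by
  have h₁ : 1 + s ≠ 0 := by linarith
  have h₂ : 2 + 2 * s ≠ 0 := by linarith
  refine ((((hasDerivAt_id s).const_add 1).log h₁).sub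
    ((hasDerivAt_id s).div (((hasDerivAt_id s).const_mul 2).const_add 2) h₂)).add
    ((hasDerivAt_pow 2 s).div_const 2) |>.congr_deriv ?_
  simp only [proxProfileDeriv, id]; field_simp; ring

lemma hasDerivAt_proxProfileDeriv {s : ℝ} (hs : -1 < s) :
    HasDerivAt proxProfileDeriv (-1 / (1 + s) ^ 2 + 1 / (1 + s) ^ 3 + 1) s := by
  have h₁ : 1 + s ≠ 0 := by linarith
  have hr := (hasDerivAt_id s).const_add 1
  refine (((hasDerivAt_const s 1).div hr h₁).sub
    ((hasDerivAt_const s 1).div ((hr.pow 2).const_mul 2) (by simpa using h₁))).add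
    (hasDerivAt_id s) |>.congr_deriv ?_
  simp only [id, Pi.pow_apply]; field_simp; ring

lemma continuousOn_proxProfile : ContinuousOn proxProfile (Ici 0) := fun s hs =>
  (hasDerivAt_proxProfile (by linarith [mem_Ici.mp hs])).continuousAt.continuousWithinAt

lemma convexOn_proxProfile : ConvexOn ℝ (Ici 0) proxProfile := by
  refine convexOn_of_hasDerivWithinAt2_nonneg (convex_Ici 0) continuousOn_proxProfile
    (f' := proxProfileDeriv) (f'' := fun s => -1 / (1 + s) ^ 2 + 1 / (1 + s) ^ 3 + 1)
    (fun s hs => ?_) (fun s hs => ?_) (fun s hs => ?_) <;>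
    rw [interior_Ici, mem_Ioi] at hs
  · exact (hasDerivAt_proxProfile (by linarith)).hasDerivWithinAt
  · exact (hasDerivAt_proxProfileDeriv (by linarith)).hasDerivWithinAt
  · have : 1 / (1 + s) ^ 2 ≤ 1 :=
      div_le_one_of_le₀ (one_le_pow₀ (by linarith)) (by positivity)
    have : 0 ≤ 1 / (1 + s) ^ 3 := by positivity
    rw [neg_div]
    linarith

lemma monotoneOn_proxProfile : MonotoneOn proxProfile (Ici 0) := by
  refine monotoneOn_of_hasDerivWithinAt_nonneg (convex_Ici 0) continuousOn_proxProfile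
    (f' := proxProfileDeriv) (fun s hs => ?_) (fun s hs => ?_) <;>
    rw [interior_Ici, mem_Ioi] at hs
  · exact (hasDerivAt_proxProfile (by linarith)).hasDerivWithinAt
  · have : 1 / (2 * (1 + s) ^ 2) ≤ 1 / (1 + s) := by gcongr; nlinarith
    simp only [proxProfileDeriv]
    linarith

lemma ConvexOn.comp_norm {E : Type*} [SeminormedAddCommGroup E] [NormedSpace ℝ E] {f : ℝ → ℝ}
    (hf : ConvexOn ℝ (Ici 0) f) (hf_mono : MonotoneOn f (Ici 0)) :
    ConvexOn ℝ univ (fun x : E => f ‖x‖) := by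
  refine ⟨convex_univ, fun x _ y _ a b ha hb hab => ?_⟩
  calc f ‖a • x + b • y‖ ≤ f (a * ‖x‖ + b * ‖y‖) := by
        refine hf_mono (norm_nonneg _) (mem_Ici.mpr (by positivity)) ?_
        calc ‖a • x + b • y‖ ≤ ‖a • x‖ + ‖b • y‖ := norm_add_le _ _
          _ = a * ‖x‖ + b * ‖y‖ := by
            rw [norm_smul_of_nonneg ha, norm_smul_of_nonneg hb]
    _ ≤ a • f ‖x‖ + b • f ‖y‖ := hf.2 (norm_nonneg x) (norm_nonneg y) ha hb hab

lemma convexOn_finset_sum {𝕜 E β ι : Type*} [Semiring 𝕜] [PartialOrder 𝕜] [AddCommMonoid E]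
    [AddCommMonoid β] [PartialOrder β] [IsOrderedAddMonoid β] [SMul 𝕜 E] [Module 𝕜 β]
    {s : Set E} (hs : Convex 𝕜 s) (t : Finset ι) {f : ι → E → β}
    (hf : ∀ i ∈ t, ConvexOn 𝕜 s (f i)) :
    ConvexOn 𝕜 s (fun x => ∑ i ∈ t, f i x) := by
  classical
  induction t using Finset.induction_on with
  | empty => simpa using convexOn_const (0 : β) hs
  | insert a t ha ih =>
    simp only [Finset.sum_insert ha]
    exact (hf a (t.mem_insert_self a)).add (ih fun i hi => hf i (Finset.mem_insert_of_mem hi))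

lemma convexOn_logPenalty_add_sq (c : ℝ) :
    ConvexOn ℝ univ
      (fun t : ℝ => log (1 + |t|) - |t| / (2 + 2 * |t|) + 1 / 2 * (t - c) ^ 2) := by
  have h_affine : ConvexOn ℝ univ (fun t : ℝ => -c * t + c ^ 2 / 2) :=
    ((LinearMap.mulLeft ℝ (-c)).convexOn convex_univ).add_const _
  refine ((convexOn_proxProfile.comp_norm monotoneOn_proxProfile).add h_affine).congr
    fun t _ => ?_
  simp only [proxProfile, Real.norm_eq_abs, sq_abs, Pi.add_apply]
  ring

theorem stmt_10_general (n : ℕ)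
    (g : EuclideanSpace ℝ (Fin n) → ℝ)
    (hg : ∀ x, g x = ∑ i, (Real.log (1 + |x i|) - |x i| / (2 + 2 * |x i|)))
    (u : EuclideanSpace ℝ (Fin n)) :
    ConvexOn ℝ Set.univ (fun x => g x + (1 / 2) * ‖x - u‖ ^ 2) := by
  have h_sum : (fun x => g x + (1 / 2) * ‖x - u‖ ^ 2) = fun x : EuclideanSpace ℝ (Fin n) =>
      ∑ i, (log (1 + |x i|) - |x i| / (2 + 2 * |x i|) + 1 / 2 * (x i - u i) ^ 2) := by
    funext x
    rw [hg, EuclideanSpace.norm_sq_eq, Finset.mul_sum, ← Finset.sum_add_distrib]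
    simp only [PiLp.sub_apply, Real.norm_eq_abs, sq_abs]
  rw [h_sum]
  exact convexOn_finset_sum convex_univ _ fun i _ =>
    (convexOn_logPenalty_add_sq (u i)).comp_linearMap (EuclideanSpace.proj i).toLinearMap

theorem stmt_10 (n : ℕ) (hn : 0 < n)
    (g : EuclideanSpace ℝ (Fin n) → ℝ)
    (hg : ∀ x, g x = ∑ i, (Real.log (1 + |x i|) - |x i| / (2 + 2 * |x i|)))
    (u : EuclideanSpace ℝ (Fin n)) :
    ConvexOn ℝ Set.univ (fun x => g x + (1 / 2) * ‖x - u‖ ^ 2) :=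
  stmt_10_general n g hg u
end

section
/- The function w ↦ (log(1 + w) - w / (2 + 2w)) / w is antitone (non-increasing) on the open interval (0, ∞). -/
/-!
The numerator `g w = log (1 + w) - w / (2 + 2w)` vanishes at `0` and is concave on `[0, ∞)`:
with `t = (1 + w)⁻¹` its derivative is `t - t² / 2`, which increases with `t ∈ (0, 1]` and hence
decreases with `w`. For a concave function vanishing at `0`, `g w / w` is the slope of the chord
from `0`, and chord slopes of a concave function decrease.
-/

open Real Set

lemma ConcaveOn.antitoneOn_div_self_of_map_zero {𝕜 : Type*} [Field 𝕜] [LinearOrder 𝕜]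
    [IsStrictOrderedRing 𝕜] {f : 𝕜 → 𝕜} (hf : ConcaveOn 𝕜 (Ici 0) f) (h0 : f 0 = 0) :
    AntitoneOn (fun x => f x / x) (Ioi 0) := by
  have hslope := hf.antitoneOn_slope_gt (self_mem_Ici (a := (0 : 𝕜)))
  intro x hx y hy hxy
  simpa [slope_def_field, h0] using hslope ⟨le_of_lt hx, hx⟩ ⟨le_of_lt hy, hy⟩ hxy

lemma hasDerivAt_log_one_add_sub_div {w : ℝ} (hw : 0 < 1 + w) :
    HasDerivAt (fun w : ℝ => log (1 + w) - w / (2 + 2 * w))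
      ((1 + w)⁻¹ - ((1 + w)⁻¹) ^ 2 / 2) w := by
  have h2 : (2 : ℝ) + 2 * w ≠ 0 := by linarith
  have hlog : HasDerivAt (fun w : ℝ => log (1 + w)) (1 / (1 + w)) w := by
    simpa using ((hasDerivAt_id w).const_add 1).log hw.ne'
  have hfrac := (hasDerivAt_id' w).div (((hasDerivAt_id' w).const_mul 2).const_add 2) h2
  refine (hlog.sub hfrac).congr_deriv ?_
  field_simp
  ring

lemma concaveOn_log_one_add_sub_div :
    ConcaveOn ℝ (Ici 0) (fun w : ℝ => log (1 + w) - w / (2 + 2 * w)) := by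
  have hderiv {w : ℝ} (hw : w ∈ Ioi 0) := hasDerivAt_log_one_add_sub_div (w := w)
    (by linarith [mem_Ioi.mp hw])
  refine AntitoneOn.concaveOn_of_deriv (convex_Ici 0) ?_ ?_ ?_
  · refine ContinuousOn.sub (ContinuousOn.log (by fun_prop) fun w hw => ?_)
      (ContinuousOn.div (by fun_prop) (by fun_prop) fun w hw => ?_) <;>
    · have : (0 : ℝ) ≤ w := hw
      positivity
  · rw [interior_Ici]
    exact fun w hw => (hderiv hw).differentiableAt.differentiableWithinAt
  · rw [interior_Ici]
    intro a ha b hb hab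
    rw [(hderiv ha).deriv, (hderiv hb).deriv]
    have ha' : (0 : ℝ) < a := ha
    have hb' : (0 : ℝ) < b := hb
    have hinv : (1 + b)⁻¹ ≤ (1 + a)⁻¹ := inv_anti₀ (by positivity) (by linarith)
    have hle_one : (1 + a)⁻¹ ≤ 1 := inv_le_one_of_one_le₀ (by linarith)
    have hpos : 0 ≤ (1 + b)⁻¹ := by positivity
    nlinarith

theorem stmt_12 :
    AntitoneOn (fun w : ℝ => (Real.log (1 + w) - w / (2 + 2 * w)) / w) (Set.Ioi 0) :=
  concaveOn_log_one_add_sub_div.antitoneOn_div_self_of_map_zero (by simp)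
end

section
/- Let n be a positive integer, let f : ℝⁿ → ℝ be differentiable with gradient ∇f Lipschitz continuous with constant L ≥ 0, let g : ℝⁿ → ℝ, and let λ, α > 0. If points x, v ∈ ℝⁿ satisfy ⟪∇f(x), v - x⟫ + (1/(2λα))‖v - x‖² + g(v) ≤ g(x), then f(v) + g(v) ≤ f(x) + g(x) - (1/(2λα) - L/2)‖v - x‖². -/
open Real
open scoped RealInnerProductSpace

/-!
Along the segment `t ↦ x + t • (v - x)` the derivative of `f` exceeds `⟪∇f x, v - x⟫` by at most
`L t ‖v - x‖²`, so `f` stays below the quadratic `f x + t ⟪∇f x, v - x⟫ + (L / 2) t² ‖v - x‖²`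
on `[0, 1]`. At `t = 1` this is the descent lemma
`f v ≤ f x + ⟪∇f x, v - x⟫ + (L / 2) ‖v - x‖²`, and adding it to the hypothesis gives the claim.
-/

section DescentLemma

variable {E : Type*} [NormedAddCommGroup E] [InnerProductSpace ℝ E] [CompleteSpace E]

theorem hasDerivAt_comp_add_smul_of_differentiable {f : E → ℝ} (hf : Differentiable ℝ f)
    (x u : E) (t : ℝ) :
    HasDerivAt (fun s : ℝ => f (x + s • u)) ⟪gradient f (x + t • u), u⟫ t := by
  have hline : HasDerivAt (fun s : ℝ => x + s • u) u t := by
    simpa using ((hasDerivAt_id t).smul_const u).const_add x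
  exact (hf _).hasGradientAt.hasFDerivAt.comp_hasDerivAt t hline

theorem inner_gradient_add_smul_sub_le {f : E → ℝ} {L : ℝ}
    (hlip : ∀ a b, ‖gradient f a - gradient f b‖ ≤ L * ‖a - b‖) (x u : E) {t : ℝ}
    (ht : 0 ≤ t) :
    ⟪gradient f (x + t • u) - gradient f x, u⟫ ≤ L * t * ‖u‖ ^ 2 :=
  calc ⟪gradient f (x + t • u) - gradient f x, u⟫
      ≤ ‖gradient f (x + t • u) - gradient f x‖ * ‖u‖ := real_inner_le_norm _ _
    _ ≤ L * ‖x + t • u - x‖ * ‖u‖ := by gcongr; exact hlip _ _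
    _ = L * t * ‖u‖ ^ 2 := by
      rw [add_sub_cancel_left, norm_smul, Real.norm_of_nonneg ht]; ring

theorem le_add_inner_gradient_add_sq_of_lipschitz_gradient {f : E → ℝ}
    (hf : Differentiable ℝ f) {L : ℝ}
    (hlip : ∀ a b, ‖gradient f a - gradient f b‖ ≤ L * ‖a - b‖) (x v : E) :
    f v ≤ f x + ⟪gradient f x, v - x⟫ + L / 2 * ‖v - x‖ ^ 2 := by
  set u := v - x
  have hderiv := hasDerivAt_comp_add_smul_of_differentiable hf x u
  have hquad : ∀ t : ℝ,
      HasDerivAt (fun s : ℝ => f x + s * ⟪gradient f x, u⟫ + L / 2 * s ^ 2 * ‖u‖ ^ 2)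
        (⟪gradient f x, u⟫ + L * t * ‖u‖ ^ 2) t := by
    intro t
    refine ((((hasDerivAt_id' t).mul_const _).const_add _).fun_add
      (((hasDerivAt_pow 2 t).const_mul (L / 2)).mul_const _)).congr_deriv ?_
    push_cast; ring
  have hslope : ∀ t ∈ Set.Ico (0 : ℝ) 1,
      ⟪gradient f (x + t • u), u⟫ ≤ ⟪gradient f x, u⟫ + L * t * ‖u‖ ^ 2 := by
    intro t ht
    have := inner_gradient_add_smul_sub_le hlip x u ht.1
    rw [inner_sub_left] at this
    linarith
  have hle := image_le_of_deriv_right_le_deriv_boundary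
    (fun t _ => (hderiv t).continuousAt.continuousWithinAt)
    (fun t _ => (hderiv t).hasDerivWithinAt) (by simp)
    (fun t _ => (hquad t).continuousAt.continuousWithinAt)
    (fun t _ => (hquad t).hasDerivWithinAt) hslope (Set.right_mem_Icc.2 zero_le_one)
  simpa [u] using hle

end DescentLemma

theorem stmt_15_general (n : ℕ)
    (f g : EuclideanSpace ℝ (Fin n) → ℝ)
    (hf : Differentiable ℝ f) (L : ℝ)
    (hlip : ∀ x y, ‖gradient f x - gradient f y‖ ≤ L * ‖x - y‖)
    (lam α : ℝ)
    (x v : EuclideanSpace ℝ (Fin n))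
    (h : ⟪gradient f x, v - x⟫ + (1 / (2 * lam * α)) * ‖v - x‖ ^ 2 + g v ≤ g x) :
    f v + g v ≤ f x + g x - (1 / (2 * lam * α) - L / 2) * ‖v - x‖ ^ 2 := by
  have := le_add_inner_gradient_add_sq_of_lipschitz_gradient hf hlip x v
  linarith

theorem stmt_15 (n : ℕ) (hn : 0 < n)
    (f g : EuclideanSpace ℝ (Fin n) → ℝ)
    (hf : Differentiable ℝ f) (L : ℝ) (hL : 0 ≤ L)
    (hlip : ∀ x y, ‖gradient f x - gradient f y‖ ≤ L * ‖x - y‖)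
    (lam α : ℝ) (hlam : 0 < lam) (hα : 0 < α)
    (x v : EuclideanSpace ℝ (Fin n))
    (h : ⟪gradient f x, v - x⟫ + (1 / (2 * lam * α)) * ‖v - x‖ ^ 2 + g v ≤ g x) :
    f v + g v ≤ f x + g x - (1 / (2 * lam * α) - L / 2) * ‖v - x‖ ^ 2 :=
  stmt_15_general n f g hf L hlip lam α x v h
end
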